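/- (Correctness of the reduction to the knapsack problem with conflict graph) Let p : Y → ℝ≥0 be a nonnegative weight function and for a node v ∈ 𝒱 set p_v = Σ_{c ∈ v} p(c). For integers r, k ≥ 1, the maximum of Σ_{v ∈ V̂} p_v over all collections V̂ ⊆ 𝒱 of pairwise disjoint nodes satisfying |V̂| ≤ r and Σ_{v ∈ V̂} |v| ≤ k (with V̂ nonempty) equals the maximum of P(Ŷ) = Σ_{c ∈ Ŷ} p(c) over all nonempty Ŷ ⊆ Y with R_T(Ŷ) ≤ r and |Ŷ| ≤ k. -/
import Mathlib


open Classical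

variable {Y : Type*} [Fintype Y] [DecidableEq Y]

/-- A hierarchy over the class space `Y`: a finite laminar family of nonempty node sets
containing the full space and all singletons. -/
def IsHierarchy (V : Finset (Finset Y)) : Prop :=
  (∀ v ∈ V, v.Nonempty) ∧ (Finset.univ ∈ V) ∧ (∀ c : Y, ({c} : Finset Y) ∈ V) ∧
  (∀ v₁ ∈ V, ∀ v₂ ∈ V, v₁ ∩ v₂ = ∅ ∨ v₁ ⊆ v₂ ∨ v₂ ⊆ v₁)

/-- `Vh` is a valid representation of `Yhat`: a collection of pairwise disjoint
hierarchy nodes whose union equals `Yhat`. -/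
def IsRep (V : Finset (Finset Y)) (Yhat : Finset Y) (Vh : Finset (Finset Y)) : Prop :=
  Vh ⊆ V ∧ (∀ a ∈ Vh, ∀ b ∈ Vh, a ≠ b → a ∩ b = ∅) ∧ Vh.sup id = Yhat

/-- The representation complexity `R_T(Yhat)`: the minimal number of pairwise disjoint
hierarchy nodes needed to represent `Yhat`. -/
noncomputable def repC (V : Finset (Finset Y)) (Yhat : Finset Y) : ℕ :=
  sInf {n : ℕ | ∃ Vh : Finset (Finset Y), IsRep V Yhat Vh ∧ Vh.card = n}

theorem stmt_11 (V : Finset (Finset Y)) (hV : IsHierarchy V) (hK : 2 ≤ Fintype.card Y)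
    (p : Y → ℝ) (hp : ∀ c, 0 ≤ p c) (r k : ℕ) (hr : 1 ≤ r) (hk : 1 ≤ k) :
    sSup {x : ℝ | ∃ Vh : Finset (Finset Y), Vh.Nonempty ∧ Vh ⊆ V ∧
        (∀ a ∈ Vh, ∀ b ∈ Vh, a ≠ b → a ∩ b = ∅) ∧ Vh.card ≤ r ∧
        (∑ v ∈ Vh, v.card) ≤ k ∧ x = ∑ v ∈ Vh, ∑ c ∈ v, p c} =
    sSup {x : ℝ | ∃ Yhat : Finset Y, Yhat.Nonempty ∧ repC V Yhat ≤ r ∧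
        Yhat.card ≤ k ∧ x = ∑ c ∈ Yhat, p c} := by
  have key : ∀ Vh : Finset (Finset Y),
      (∀ a ∈ Vh, ∀ b ∈ Vh, a ≠ b → a ∩ b = ∅) →
      (Vh.sup id).card = ∑ v ∈ Vh, v.card ∧
      ∑ c ∈ Vh.sup id, p c = ∑ v ∈ Vh, ∑ c ∈ v, p c := by
    intro Vh hdisj
    have hdisj' : ∀ a ∈ Vh, ∀ b ∈ Vh, a ≠ b → Disjoint a b := fun a ha b hb hab =>
      Finset.disjoint_iff_inter_eq_empty.mpr (hdisj a ha b hb hab)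
    constructor
    · rw [Finset.sup_eq_biUnion]
      exact Finset.card_biUnion hdisj'
    · rw [Finset.sup_eq_biUnion]
      exact Finset.sum_biUnion (fun a ha b hb hab => hdisj' a ha b hb hab)
  have hset : {x : ℝ | ∃ Vh : Finset (Finset Y), Vh.Nonempty ∧ Vh ⊆ V ∧
        (∀ a ∈ Vh, ∀ b ∈ Vh, a ≠ b → a ∩ b = ∅) ∧ Vh.card ≤ r ∧
        (∑ v ∈ Vh, v.card) ≤ k ∧ x = ∑ v ∈ Vh, ∑ c ∈ v, p c} =
      {x : ℝ | ∃ Yhat : Finset Y, Yhat.Nonempty ∧ repC V Yhat ≤ r ∧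
        Yhat.card ≤ k ∧ x = ∑ c ∈ Yhat, p c} := by
    ext x
    constructor
    · rintro ⟨Vh, hne, hsub, hdisj, hcard, hsum, rfl⟩
      obtain ⟨h1, h2⟩ := key Vh hdisj
      refine ⟨Vh.sup id, ?_, ?_, ?_, h2.symm⟩
      · obtain ⟨v, hv⟩ := hne
        obtain ⟨c, hc⟩ := hV.1 v (hsub hv)
        exact ⟨c, Finset.le_sup (f := id) hv hc⟩
      · exact le_trans (Nat.sInf_le ⟨Vh, ⟨hsub, hdisj, rfl⟩, rfl⟩) hcard
      · rw [h1]; exact hsum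
    · rintro ⟨Yhat, hne, hrC, hkC, rfl⟩
      have hSne : {n : ℕ | ∃ Vh : Finset (Finset Y), IsRep V Yhat Vh ∧ Vh.card = n}.Nonempty := by
        refine ⟨_, Yhat.image (fun c => ({c} : Finset Y)), ⟨?_, ?_, ?_⟩, rfl⟩
        · intro s hs
          obtain ⟨c, _, rfl⟩ := Finset.mem_image.mp hs
          exact hV.2.2.1 c
        · intro a ha b hb hab
          obtain ⟨c, _, rfl⟩ := Finset.mem_image.mp ha
          obtain ⟨d, _, rfl⟩ := Finset.mem_image.mp hb
          have hcd : c ≠ d := fun h => hab (by rw [h])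
          simp [Finset.singleton_inter_of_notMem, hcd]
        · rw [Finset.sup_image]
          ext c
          simp [Finset.mem_sup]
      obtain ⟨Vh, ⟨hsub, hdisj, hunion⟩, hcard⟩ := Nat.sInf_mem hSne
      obtain ⟨h1, h2⟩ := key Vh hdisj
      have hne' : Vh.Nonempty := by
        rcases Finset.eq_empty_or_nonempty Vh with h | h
        · rw [h] at hunion
          simp at hunion
          exact absurd hunion.symm (Finset.nonempty_iff_ne_empty.mp hne)
        · exact h
      refine ⟨Vh, hne', hsub, hdisj, ?_, ?_, ?_⟩
      · rw [hcard]; exact hrC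
      · rw [← h1, hunion]; exact hkC
      · rw [← h2, hunion]
  rw [hset]
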